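/- Let ε ∈ {1,−1}, ξ > 0, w_m ∈ ℝ, λ*, z* ∈ ℝ with c₁ := 2ξλ*z* + 1 + w_m > 0, and y* = √(4ξ/c₁). Define F(u,v) = −3y*c₁·uv, G(u,v) = −12ξv + (ε/2)(1−3w_m)y*·u² − (9/2)c₁y*·v² + 12εξ(1−6ξ)z*·uv, and φ(u) = (ε(1−3w_m)y*/(24ξ))·u² + ((1−6ξ)(1−3w_m)z*y*/(24ξ))·u³. Then, as u → 0: (i) φ′(u)·F(u, φ(u)) − G(u, φ(u)) = O(u⁴); (ii) F(u, φ(u)) = −(ε/2)(1−3w_m)·u³ + O(u⁴). In particular, the vector field restricted to the center manifold v = φ(u) of the fast-roll inflation point is η′ = −(ε/2)(1−3w_m)η³ + O(η⁴), which is stable for ε(1−3w_m) > 0 and unstable for ε(1−3w_m) < 0. -/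

import Mathlib

/-!
With `φ(u) = a u² + b u³`, the invariance defect `φ′F(u,φ) − G(u,φ)` of the field
`F = k u v`, `G = μ v + α u² − β v² + γ u v` is a polynomial in `u` whose `u²` and `u³`
coefficients are `−(μ a + α)` and `−(μ b + γ a)`; every other term carries `u⁴`.
At the fast-roll point `μ = −12ξ`, and both coefficients vanish for the given `a` and `b`
(the `u³` one because `ε² = 1`). Along the manifold `F(u,φ(u)) = k a u³ + O(u⁴)`,
and `(y*)² c₁ = 4ξ` makes `k a = −(ε/2)(1 − 3w_m)`.
-/

open Asymptotics Filter Topology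

lemma isBigO_nhds_zero_pow_of_eq_pow_mul {f g : ℝ → ℝ} {n : ℕ} (hg : ContinuousAt g 0)
    (hfg : ∀ u, f u = u ^ n * g u) : f =O[𝓝 0] (· ^ n) := by
  have := (isBigO_refl (· ^ n) (𝓝 (0 : ℝ))).mul (hg.tendsto.isBigO_one ℝ)
  simpa only [mul_one, ← hfg] using this

lemma deriv_quadratic_add_cubic (a b u : ℝ) :
    deriv (fun u => a * u ^ 2 + b * u ^ 3) u = 2 * a * u + 3 * b * u ^ 2 := by
  have h := ((hasDerivAt_pow 2 u).const_mul a).add ((hasDerivAt_pow 3 u).const_mul b)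
  exact (h.congr_deriv (by push_cast; ring)).deriv

section QuadraticCubicManifold

variable {F G : ℝ → ℝ → ℝ} {φ : ℝ → ℝ} {k a b : ℝ}

lemma invariance_defect_isBigO {μ α β γ : ℝ} (hF : F = fun u v => k * u * v)
    (hG : G = fun u v => μ * v + α * u ^ 2 - β * v ^ 2 + γ * u * v)
    (hφ : φ = fun u => a * u ^ 2 + b * u ^ 3) (h₂ : μ * a + α = 0) (h₃ : μ * b + γ * a = 0) :
    (fun u => deriv φ u * F u (φ u) - G u (φ u)) =O[𝓝 0] (· ^ 4) := by
  refine isBigO_nhds_zero_pow_of_eq_pow_mul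
    (g := fun u => k * (2 * a + 3 * b * u) * (a + b * u) + β * (a + b * u) ^ 2 - γ * b)
    (by fun_prop) fun u => ?_
  subst hF hG hφ
  rw [deriv_quadratic_add_cubic]
  linear_combination (-u ^ 2) * h₂ + (-u ^ 3) * h₃

lemma restricted_field_sub_cubic_isBigO {L : ℝ} (hF : F = fun u v => k * u * v)
    (hφ : φ = fun u => a * u ^ 2 + b * u ^ 3) (h : k * a = L) :
    (fun u => F u (φ u) - L * u ^ 3) =O[𝓝 0] (· ^ 4) :=
  isBigO_nhds_zero_pow_of_eq_pow_mul (g := fun _ => k * b) continuousAt_const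
    fun u => by subst hF hφ; linear_combination u ^ 3 * h

end QuadraticCubicManifold

theorem fastRoll_center_manifold (ε ξ wm lstar zstar : ℝ)
    (hε : ε = 1 ∨ ε = -1) (hξ : 0 < ξ)
    (hc : 0 < 2*ξ*lstar*zstar + 1 + wm) :
    let c₁ : ℝ := 2*ξ*lstar*zstar + 1 + wm
    let ystar : ℝ := Real.sqrt (4*ξ/c₁)
    let F : ℝ → ℝ → ℝ := fun u v => -3*ystar*c₁*u*v
    let G : ℝ → ℝ → ℝ := fun u v =>
      -12*ξ*v + ε/2*(1-3*wm)*ystar*u^2 - 9/2*c₁*ystar*v^2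
        + 12*ε*ξ*(1-6*ξ)*zstar*u*v
    let φ : ℝ → ℝ := fun u =>
      ε*(1-3*wm)*ystar/(24*ξ)*u^2 + (1-6*ξ)*(1-3*wm)*zstar*ystar/(24*ξ)*u^3
    ((fun u => deriv φ u * F u (φ u) - G u (φ u)) =O[nhds 0] fun u => u^4) ∧
    ((fun u => F u (φ u) - (-(ε/2)*(1-3*wm)*u^3)) =O[nhds 0] fun u => u^4) := by
  intro c₁ ystar F G φ
  have hε₂ : ε ^ 2 = 1 := by rcases hε with rfl | rfl <;> norm_num
  have hc₁ : c₁ ≠ 0 := hc.ne'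
  have hy : ystar ^ 2 = 4 * ξ / c₁ := Real.sq_sqrt (by positivity)
  refine ⟨invariance_defect_isBigO rfl rfl rfl ?quadratic ?cubic,
    restricted_field_sub_cubic_isBigO rfl rfl ?leading⟩
  case quadratic =>
    field_simp
    ring
  case cubic =>
    field_simp
    linear_combination (12 * (1 - 6 * ξ) * (1 - 3 * wm) * zstar * ystar) * hε₂
  case leading =>
    field_simp
    rw [hy]
    field_simp
    ring
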